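/- arXiv:math/0403286 — 5 statements merged into one kernel-verified Lean document; each statement's English description precedes it below -/
import Mathlib

section
/- Let h be a symmetric bilinear form on an n-dimensional Euclidean space (n ≥ 4) and let R be the algebraic curvature tensor given by the Kulkarni–Nomizu product R = g ∧ h (so R is 'conformally flat'). If the scalar curvature of R vanishes, then h₄ = ‖R‖² − ‖Ric‖² + (1/4)scal² ≤ 0, with equality if and only if R = 0. -/
open Finset

/-- Let `h` be a symmetric bilinear form on an `n`-dimensional Euclidean space (`n ≥ 4`,
components in an orthonormal basis) and let `R = g ∧ h` be the Kulkarni–Nomizu product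
(a "conformally flat" algebraic curvature tensor).  If the scalar curvature of `R`
vanishes, then `h₄ = ‖R‖² - ‖Ric‖² + (1/4)·scal² ≤ 0`, with equality iff `R = 0`. -/
theorem conf_flat_h4_nonpos (n : ℕ) (hn : 4 ≤ n)
    (h : Fin n → Fin n → ℝ) (hsym : ∀ i j, h i j = h j i)
    (R : Fin n → Fin n → Fin n → Fin n → ℝ)
    (hR : ∀ i j k l, R i j k l =
      (if i = k then (1:ℝ) else 0) * h j l + (if j = l then (1:ℝ) else 0) * h i k
      - (if i = l then (1:ℝ) else 0) * h j k - (if j = k then (1:ℝ) else 0) * h i l)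
    (hscal : (∑ i, ∑ k, R k i k i) = 0) :
    ((1/4) * (∑ i, ∑ j, ∑ k, ∑ l, (R i j k l)^2)
        - (∑ i, ∑ j, (∑ k, R k i k j)^2)
        + (1/4) * (∑ i, ∑ k, R k i k i)^2 ≤ 0) ∧
    ((1/4) * (∑ i, ∑ j, ∑ k, ∑ l, (R i j k l)^2)
        - (∑ i, ∑ j, (∑ k, R k i k j)^2)
        + (1/4) * (∑ i, ∑ k, R k i k i)^2 = 0 ↔ ∀ i j k l, R i j k l = 0) := by
  have hn' : (4:ℝ) ≤ (n:ℝ) := by exact_mod_cast hn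
  -- the trace of h
  set T : ℝ := ∑ m, h m m with hTdef
  set S : ℝ := ∑ i, ∑ j, (h i j)^2 with hSdef
  -- scalar curvature = (2n-2) T
  have hscal' : (∑ i, ∑ k, R k i k i) = (2*(n:ℝ)-2) * T := by
    simp_rw [hR]
    simp [Finset.sum_add_distrib, Finset.sum_sub_distrib, Finset.mul_sum,
      Finset.sum_ite_eq, Finset.sum_ite_eq', Finset.sum_comm (f := fun k i => h k k)]
    rw [hTdef, Finset.mul_sum]
    simp only [← Finset.sum_add_distrib, ← Finset.sum_sub_distrib]
    exact Finset.sum_congr rfl fun x _ => by ring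
  have hT : T = 0 := by
    have := hscal
    rw [hscal'] at this
    have hne : (2*(n:ℝ)-2) ≠ 0 := by nlinarith
    exact (mul_eq_zero.mp this).resolve_left hne
  -- Ricci tensor
  have hRic : ∀ i j, (∑ k, R k i k j) = ((n:ℝ)-2) * h i j := by
    intro i j
    simp_rw [hR]
    simp [Finset.sum_add_distrib, Finset.sum_sub_distrib, Finset.sum_ite_eq,
      Finset.sum_ite_eq', ← hTdef, hT]
    ring
  -- norm of Ricci
  have hRic2 : (∑ i, ∑ j, (∑ k, R k i k j)^2) = ((n:ℝ)-2)^2 * S := by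
    simp_rw [hRic, mul_pow, hSdef, Finset.mul_sum]
  -- norm of R
  have hRR : (∑ i, ∑ j, ∑ k, ∑ l, (R i j k l)^2) = 4*((n:ℝ)-2) * S := by
    have main : (∑ i, ∑ j, ∑ k, ∑ l, (R i j k l)^2)
        = 4*((n:ℝ)-2) * S + 4*T^2 := by
      simp_rw [hR]
      have key : ∀ (a b c d x y z w : ℝ), (a*x + b*y - c*z - d*w)^2 =
          a*a*x^2 + b*b*y^2 + c*c*z^2 + d*d*w^2
          + 2*((a*b)*(x*y)) - 2*((a*c)*(x*z)) - 2*((a*d)*(x*w))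
          - 2*((b*c)*(y*z)) - 2*((b*d)*(y*w)) + 2*((c*d)*(z*w)) := by intros; ring
      simp_rw [key]
      rw [hTdef, hSdef]
      simp only [sq, Finset.sum_mul_sum]
      simp [Finset.sum_add_distrib, Finset.sum_sub_distrib, Finset.sum_ite_eq,
        Finset.sum_ite_eq', ite_and, hsym, mul_ite, ite_mul, Finset.mul_sum,
        Finset.sum_comm (f := fun k i => h k k)]
      simp only [← Finset.sum_add_distrib, ← Finset.sum_sub_distrib]
      exact Finset.sum_congr rfl fun x _ => Finset.sum_congr rfl fun y _ => by ring
    rw [main, hT]; ring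
  -- S is nonnegative
  have hS0 : 0 ≤ S := by
    apply Finset.sum_nonneg
    intro i _
    exact Finset.sum_nonneg fun j _ => sq_nonneg _
  -- the full expression
  have hexpr : (1/4) * (∑ i, ∑ j, ∑ k, ∑ l, (R i j k l)^2)
        - (∑ i, ∑ j, (∑ k, R k i k j)^2)
        + (1/4) * (∑ i, ∑ k, R k i k i)^2
      = -(((n:ℝ)-2)*((n:ℝ)-3)) * S := by
    rw [hRR, hRic2, hscal', hT]
    ring
  have hcoef : 0 < ((n:ℝ)-2)*((n:ℝ)-3) := by nlinarith
  constructor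
  · rw [hexpr]
    have : 0 ≤ ((n:ℝ)-2)*((n:ℝ)-3) * S := mul_nonneg (le_of_lt hcoef) hS0
    linarith
  · rw [hexpr]
    constructor
    · intro hz
      have hSz : S = 0 := by
        have h' : ((n:ℝ)-2)*((n:ℝ)-3)*S = 0 := by linarith
        exact (mul_eq_zero.mp h').resolve_left (ne_of_gt hcoef)
      have hh : ∀ i j, h i j = 0 := by
        intro i j
        have h1 : ∀ i ∈ (Finset.univ : Finset (Fin n)), (0:ℝ) ≤ ∑ j, (h i j)^2 :=
          fun i _ => Finset.sum_nonneg fun j _ => sq_nonneg _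
        have h3 : (∑ j, (h i j)^2) = 0 :=
          (Finset.sum_eq_zero_iff_of_nonneg h1).mp hSz i (Finset.mem_univ i)
        have h4 : (h i j)^2 = 0 :=
          (Finset.sum_eq_zero_iff_of_nonneg (fun j _ => sq_nonneg (h i j))).mp h3 j
            (Finset.mem_univ j)
        exact pow_eq_zero_iff two_ne_zero |>.mp h4
      intro i j k l
      simp [hR, hh]
    · intro hz
      have : S = 0 := by
        have : (∑ i, ∑ k, R k i k i) = 0 := by simp [hz]
        rw [hscal'] at this
        -- need S = 0 from R = 0; instead use hRR
        have h2 : (∑ i, ∑ j, ∑ k, ∑ l, (R i j k l)^2) = 0 := by simp [hz]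
        rw [hRR] at h2
        have hne : 4*((n:ℝ)-2) ≠ 0 := by nlinarith
        exact (mul_eq_zero.mp h2).resolve_left hne
      rw [this]; ring
end

section
/- For a conformally flat algebraic curvature tensor R = g ∧ h with zero scalar curvature, h₄ = ((n−3)/(n−2))·( (n/(4(n−1)))·scal² − ‖Ric‖² ); in particular, since scal = 0, h₄ = −((n−3)/(n−2))·‖Ric‖². -/
open Finset

lemma kn_sq_sum (n : ℕ) (h : Fin n → Fin n → ℝ) (hsym : ∀ i j, h i j = h j i) (i j : Fin n) :
    (∑ k, ∑ l, ((if i = k then h j l else 0) + (if j = l then h i k else 0)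
      - (if i = l then h j k else 0) - (if j = k then h i l else 0))^2)
    = 2*(∑ k, h i k^2) + 2*(∑ k, h j k^2) + 4*(h i i*h j j) - 4*h i j^2
      - (if i = j then 4*(∑ k, h i k^2) else 0) := by
  have expand : ∀ a b c d : ℝ, (a+b-c-d)^2 =
      a*a+b*b+c*c+d*d+2*(a*b)-2*(a*c)-2*(a*d)-2*(b*c)-2*(b*d)+2*(c*d) := by intros; ring
  simp only [expand]
  simp only [ite_mul, mul_ite, mul_zero, zero_mul, Finset.sum_add_distrib, Finset.sum_sub_distrib,
    Finset.mul_sum, Finset.sum_ite_eq, Finset.sum_ite_eq', Finset.mem_univ, if_true,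
    Finset.sum_ite_irrel, Finset.sum_const_zero]
  have e : h j i = h i j := hsym j i
  rcases eq_or_ne i j with rfl | hij
  · simp only [if_pos rfl, pow_two, ← Finset.mul_sum, if_true]
    ring
  · rw [if_neg hij, if_neg (Ne.symm hij), if_neg hij]
    simp only [pow_two, ← Finset.mul_sum]
    rw [e]
    ring

/-- For a conformally flat algebraic curvature tensor `R = g ∧ h` (Kulkarni–Nomizu
product, components in an orthonormal basis, `n ≥ 4`) with zero scalar curvature:
`h₄ = ((n-3)/(n-2))·((n/(4(n-1)))·scal² - ‖Ric‖²)`; in particular, since `scal = 0`,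
`h₄ = -((n-3)/(n-2))·‖Ric‖²`. -/
theorem conf_flat_h4_formula (n : ℕ) (hn : 4 ≤ n)
    (h : Fin n → Fin n → ℝ) (hsym : ∀ i j, h i j = h j i)
    (R : Fin n → Fin n → Fin n → Fin n → ℝ)
    (hR : ∀ i j k l, R i j k l =
      (if i = k then (1:ℝ) else 0) * h j l + (if j = l then (1:ℝ) else 0) * h i k
      - (if i = l then (1:ℝ) else 0) * h j k - (if j = k then (1:ℝ) else 0) * h i l)
    (hscal : (∑ i, ∑ k, R k i k i) = 0) :
    ((1/4) * (∑ i, ∑ j, ∑ k, ∑ l, (R i j k l)^2)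
        - (∑ i, ∑ j, (∑ k, R k i k j)^2)
        + (1/4) * (∑ i, ∑ k, R k i k i)^2
      = (((n : ℝ) - 3) / ((n : ℝ) - 2)) *
          (((n : ℝ) / (4 * ((n : ℝ) - 1))) * (∑ i, ∑ k, R k i k i)^2
            - (∑ i, ∑ j, (∑ k, R k i k j)^2))) ∧
    ((1/4) * (∑ i, ∑ j, ∑ k, ∑ l, (R i j k l)^2)
        - (∑ i, ∑ j, (∑ k, R k i k j)^2)
        + (1/4) * (∑ i, ∑ k, R k i k i)^2
      = - (((n : ℝ) - 3) / ((n : ℝ) - 2)) * (∑ i, ∑ j, (∑ k, R k i k j)^2)) := by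
  set T : ℝ := ∑ i, h i i with hTdef
  set A : ℝ := ∑ i, ∑ j, (h i j)^2 with hAdef
  have hR' : ∀ i j k l, R i j k l =
      (if i = k then h j l else 0) + (if j = l then h i k else 0)
      - (if i = l then h j k else 0) - (if j = k then h i l else 0) := by
    intro i j k l; rw [hR]; simp [boole_mul]
  -- Ricci contraction
  have hric : ∀ i j, (∑ k, R k i k j) = ((n:ℝ)-2) * h i j + (if i = j then T else 0) := by
    intro i j
    simp only [hR]
    simp [Finset.sum_add_distrib, Finset.sum_sub_distrib, boole_mul,
      Finset.sum_ite_eq, Finset.sum_ite_eq']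
    ring
  -- trace of h is zero
  have hT : T = 0 := by
    have h1 : (∑ i, ∑ k, R k i k i) = (2*(n:ℝ) - 2) * T := by
      simp only [hric, if_pos rfl]
      rw [Finset.sum_add_distrib]
      simp [← Finset.mul_sum, ← hTdef]
      ring
    rw [h1] at hscal
    have hne : (2*(n:ℝ) - 2) ≠ 0 := by
      have : (4:ℝ) ≤ n := by exact_mod_cast hn
      nlinarith
    exact (mul_eq_zero.mp hscal).resolve_left hne
  have hricz : ∀ i j, (∑ k, R k i k j) = ((n:ℝ)-2) * h i j := by
    intro i j; rw [hric, hT]; simp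
  -- norm of Ricci squared
  have hRic2 : (∑ i, ∑ j, (∑ k, R k i k j)^2) = ((n:ℝ)-2)^2 * A := by
    simp only [hricz, mul_pow, ← Finset.mul_sum, hAdef]
  -- norm of R squared
  have hR2 : (∑ i, ∑ j, ∑ k, ∑ l, (R i j k l)^2) = 4*((n:ℝ)-2) * A := by
    have step : ∀ i j, (∑ k, ∑ l, (R i j k l)^2)
        = 2*(∑ k, h i k^2) + 2*(∑ k, h j k^2) + 4*(h i i*h j j) - 4*h i j^2
          - (if i = j then 4*(∑ k, h i k^2) else 0) := by
      intro i j
      simp only [hR']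
      exact kn_sq_sum n h hsym i j
    simp only [step]
    have expand : (∑ i : Fin n, ∑ j : Fin n, (2*(∑ k, h i k^2) + 2*(∑ k, h j k^2)
          + 4*(h i i*h j j) - 4*h i j^2 - (if i = j then 4*(∑ k, h i k^2) else 0)))
        = 4*(n:ℝ)*A + 4*T^2 - 8*A := by
      have norm1 : ∀ i j : Fin n, 4*(h i i*h j j) = (4*h i i)*h j j := by intros; ring
      simp only [norm1, Finset.sum_sub_distrib, Finset.sum_add_distrib, Finset.sum_const,
        Finset.card_univ, Fintype.card_fin, nsmul_eq_mul, ← Finset.mul_sum,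
        Finset.sum_ite_eq, Finset.mem_univ, if_true, ← Finset.sum_mul, ← hTdef, ← hAdef]
      ring
    rw [expand, hT]
    ring
  rw [hR2, hRic2, hscal]
  have hne2 : ((n:ℝ) - 2) ≠ 0 := by
    have : (4:ℝ) ≤ n := by exact_mod_cast hn
    nlinarith
  constructor <;> · field_simp; ring
end

section
/- For a hypersurface of Euclidean space with second fundamental form B having eigenvalues λ₁,…,λₙ, the invariant h₄ = ‖R‖² − ‖Ric‖² + (1/4)scal² equals 6·e₄(λ₁,…,λₙ), where e₄ is the 4th elementary symmetric polynomial. Equivalently: for an algebraic curvature tensor R = (1/2)B² obtained from the Gauss equation R_{ijkl} = B_{ik}B_{jl} − B_{il}B_{jk}, one has h₄ = 6·Σ_{i₁<i₂<i₃<i₄} λ_{i₁}λ_{i₂}λ_{i₃}λ_{i₄}. -/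
open Finset

lemma esum_insert {ι : Type*} [DecidableEq ι] {a : ι} {s : Finset ι} (ha : a ∉ s)
    (f : ι → ℝ) (k : ℕ) :
    ∑ t ∈ (insert a s).powersetCard (k+1), ∏ i ∈ t, f i
      = (∑ t ∈ s.powersetCard (k+1), ∏ i ∈ t, f i)
        + f a * ∑ t ∈ s.powersetCard k, ∏ i ∈ t, f i := by
  rw [powersetCard_succ_insert ha, sum_union, sum_image, mul_sum]
  · congr 1
    apply sum_congr rfl
    intro t ht
    rw [prod_insert (fun hat => ha ((mem_powersetCard.mp ht).1 hat))]
  · intro t ht u hu htu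
    have h1 := (mem_powersetCard.mp ht).1
    have h2 := (mem_powersetCard.mp hu).1
    have : ∀ v : Finset ι, v ⊆ s → (insert a v).erase a = v := fun v hv => by
      rw [erase_insert (fun hav => ha (hv hav))]
    rw [← this t h1, ← this u h2, htu]
  · rw [disjoint_right]
    intro t ht hts
    obtain ⟨u, hu, rfl⟩ := mem_image.mp ht
    exact ha ((mem_powersetCard.mp hts).1 (mem_insert_self a u))

lemma esymm_psum {ι : Type*} [DecidableEq ι] (s : Finset ι) (f : ι → ℝ) :
    (∑ t ∈ s.powersetCard 1, ∏ i ∈ t, f i) = (∑ i ∈ s, f i)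
    ∧ 2 * (∑ t ∈ s.powersetCard 2, ∏ i ∈ t, f i)
        = (∑ i ∈ s, f i)^2 - (∑ i ∈ s, (f i)^2)
    ∧ 6 * (∑ t ∈ s.powersetCard 3, ∏ i ∈ t, f i)
        = (∑ i ∈ s, f i)^3 - 3*(∑ i ∈ s, f i)*(∑ i ∈ s, (f i)^2) + 2*(∑ i ∈ s, (f i)^3)
    ∧ 24 * (∑ t ∈ s.powersetCard 4, ∏ i ∈ t, f i)
        = (∑ i ∈ s, f i)^4 - 6*(∑ i ∈ s, f i)^2*(∑ i ∈ s, (f i)^2)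
          + 3*(∑ i ∈ s, (f i)^2)^2 + 8*(∑ i ∈ s, f i)*(∑ i ∈ s, (f i)^3)
          - 6*(∑ i ∈ s, (f i)^4) := by
  induction s using Finset.induction with
  | empty =>
    rw [powersetCard_eq_empty.mpr (by simp), powersetCard_eq_empty.mpr (by simp),
      powersetCard_eq_empty.mpr (by simp), powersetCard_eq_empty.mpr (by simp)]
    simp
  | @insert a s ha ih =>
    obtain ⟨h1, h2, h3, h4⟩ := ih
    have e0 : ∑ t ∈ s.powersetCard 0, ∏ i ∈ t, f i = 1 := by simp
    have E1 := esum_insert ha f 0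
    have E2 := esum_insert ha f 1
    have E3 := esum_insert ha f 2
    have E4 := esum_insert ha f 3
    norm_num at E1 E2 E3 E4
    rw [E1, E2, E3, E4, sum_insert ha, sum_insert ha, sum_insert ha, sum_insert ha]
    refine ⟨by linear_combination h1, by linear_combination h2 + 2 * f a * h1,
      by linear_combination h3 + 3 * f a * h2, by linear_combination h4 + 4 * f a * h3⟩

/-- For a hypersurface of Euclidean space whose second fundamental form `B` has
eigenvalues `λ₁, …, λₙ` (so that, in an orthonormal eigenbasis of `B`, the Gauss
equation gives `R_{ijkl} = B_{ik}B_{jl} - B_{il}B_{jk}`), the invariant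
`h₄ = ‖R‖² - ‖Ric‖² + (1/4)·scal²` equals `6·e₄(λ₁,…,λₙ)`, six times the fourth
elementary symmetric polynomial of the eigenvalues. -/
theorem hypersurface_h4 (n : ℕ) (hn : 4 ≤ n) (lam : Fin n → ℝ)
    (B : Fin n → Fin n → ℝ) (hB : ∀ i j, B i j = if i = j then lam i else 0)
    (R : Fin n → Fin n → Fin n → Fin n → ℝ)
    (hR : ∀ i j k l, R i j k l = B i k * B j l - B i l * B j k) :
    (1/4) * (∑ i, ∑ j, ∑ k, ∑ l, (R i j k l)^2)
      - (∑ i, ∑ j, (∑ k, R k i k j)^2)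
      + (1/4) * (∑ i, ∑ k, R k i k i)^2
    = 6 * ∑ s ∈ Finset.univ.powersetCard 4, ∏ i ∈ s, lam i := by
  set p1 := ∑ i, lam i with hp1
  set p2 := ∑ i, (lam i)^2 with hp2
  set p3 := ∑ i, (lam i)^3 with hp3
  set p4 := ∑ i, (lam i)^4 with hp4
  have hsymm : ∀ a b : Fin n, B a b = B b a := by
    intro a b
    rw [hB, hB]
    by_cases h : a = b
    · subst h; rfl
    · rw [if_neg h, if_neg (Ne.symm h)]
  have hBB : ∀ i j : Fin n, ∑ k, B i k * B j k = if i = j then (lam i)^2 else 0 := by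
    intro i j
    by_cases h : i = j
    · subst h
      rw [if_pos rfl, Finset.sum_eq_single i]
      · rw [hB, if_pos rfl, sq]
      · intro k _ hk
        rw [hB, if_neg (fun h' => hk h'.symm), zero_mul]
      · simp
    · rw [if_neg h]
      apply Finset.sum_eq_zero
      intro k _
      by_cases h1 : i = k
      · rw [hB j k, if_neg (fun h2 => h (h1.trans h2.symm)), mul_zero]
      · rw [hB i k, if_neg h1, zero_mul]
  have hB2 : ∀ i : Fin n, ∑ k, (B i k)^2 = (lam i)^2 := by
    intro i
    have := hBB i i
    rw [if_pos rfl] at this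
    rw [← this]
    exact Finset.sum_congr rfl fun k _ => sq (B i k)
  have htrB : ∑ k, B k k = p1 := by
    simp [hB, hp1]
  -- Ricci
  have hRic : ∀ i j : Fin n, ∑ k, R k i k j
      = if i = j then lam i * p1 - (lam i)^2 else 0 := by
    intro i j
    have step : ∀ k, R k i k j = B k k * B i j - B i k * B j k := by
      intro k
      rw [hR, hsymm k j]
      ring
    simp only [step, Finset.sum_sub_distrib, ← Finset.sum_mul, htrB, hBB, hB]
    by_cases h : i = j <;> simp [h] <;> ring
  -- norm of R
  have hRnorm : ∀ i j : Fin n, ∑ k, ∑ l, (R i j k l)^2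
      = 2 * ((lam i)^2 * (lam j)^2)
        - (if i = j then (lam i)^2 else 0) * (2 * (if i = j then (lam i)^2 else 0)) := by
    intro i j
    have expand : ∀ k l, (R i j k l)^2
        = (B i k)^2 * (B j l)^2 + (B j k)^2 * (B i l)^2
          - (2 * (B i k * B j k)) * (B i l * B j l) := by
      intro k l
      rw [hR]
      ring
    have hsum : ∀ k, ∑ l, (R i j k l)^2
        = (B i k)^2 * (lam j)^2 + (B j k)^2 * (lam i)^2
          - (2 * (B i k * B j k)) * (if i = j then (lam i)^2 else 0) := by
      intro k
      simp only [expand, Finset.sum_sub_distrib, Finset.sum_add_distrib, ← Finset.mul_sum,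
        hB2, hBB]
    have rearr : ∀ k, (B i k)^2 * (lam j)^2 + (B j k)^2 * (lam i)^2
          - (2 * (B i k * B j k)) * (if i = j then (lam i)^2 else 0)
        = (B i k)^2 * (lam j)^2 + (B j k)^2 * (lam i)^2
          - (B i k * B j k) * (2 * (if i = j then (lam i)^2 else 0)) := by
      intro k
      ring
    simp only [hsum, rearr, Finset.sum_sub_distrib, Finset.sum_add_distrib,
      ← Finset.sum_mul, hB2, hBB]
    ring
  have diag4 : ∀ i : Fin n, ∑ j, (if i = j then (lam i)^4 else 0) = (lam i)^4 := by
    intro i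
    rw [Finset.sum_ite_eq Finset.univ i (fun _ => (lam i)^4)]
    simp
  have hS : ∑ i, ∑ j, ∑ k, ∑ l, (R i j k l)^2 = 2 * p2^2 - 2 * p4 := by
    have inner : ∀ i : Fin n, ∑ j, (2 * ((lam i)^2 * (lam j)^2)
          - (if i = j then (lam i)^2 else 0) * (2 * (if i = j then (lam i)^2 else 0)))
        = (2 * (lam i)^2) * p2 - 2 * (lam i)^4 := by
      intro i
      have t1 : ∀ j : Fin n, 2 * ((lam i)^2 * (lam j)^2)
          = (2 * (lam i)^2) * (lam j)^2 := fun j => by ring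
      have t2 : ∀ j : Fin n, (if i = j then (lam i)^2 else 0)
            * (2 * (if i = j then (lam i)^2 else 0))
          = 2 * (if i = j then (lam i)^4 else 0) := by
        intro j
        by_cases h : i = j <;> simp [h] <;> ring
      simp only [t1, t2, Finset.sum_sub_distrib, ← Finset.mul_sum, diag4, ← hp2]
    have outer : ∀ i : Fin n, (2 * (lam i)^2) * p2 - 2 * (lam i)^4
        = (2 * p2) * (lam i)^2 - 2 * (lam i)^4 := fun i => by ring
    simp only [hRnorm, inner, outer, Finset.sum_sub_distrib, ← Finset.mul_sum, ← hp2, ← hp4]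
    ring
  have hRicSq : ∑ i, ∑ j, (∑ k, R k i k j)^2 = p1^2 * p2 - 2 * p1 * p3 + p4 := by
    have step : ∀ i : Fin n, ∑ j, (∑ k, R k i k j)^2 = (lam i * p1 - (lam i)^2)^2 := by
      intro i
      simp only [hRic]
      have : ∀ j : Fin n, (if i = j then lam i * p1 - (lam i)^2 else 0)^2
          = if i = j then (lam i * p1 - (lam i)^2)^2 else 0 := by
        intro j
        by_cases h : i = j <;> simp [h]
      simp only [this]
      rw [Finset.sum_ite_eq Finset.univ i (fun _ => (lam i * p1 - (lam i)^2)^2)]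
      simp
    have expand : ∀ i : Fin n, (lam i * p1 - (lam i)^2)^2
        = (p1^2) * (lam i)^2 - (2 * p1) * (lam i)^3 + (lam i)^4 := fun i => by ring
    simp only [step, expand, Finset.sum_add_distrib, Finset.sum_sub_distrib,
      ← Finset.mul_sum, ← hp2, ← hp3, ← hp4]
  have hScal : ∑ i, ∑ k, R k i k i = p1^2 - p2 := by
    have step : ∀ i : Fin n, ∑ k, R k i k i = lam i * p1 - (lam i)^2 := by
      intro i
      rw [hRic i i, if_pos rfl]
    simp only [step, Finset.sum_sub_distrib, ← Finset.sum_mul, ← hp1, ← hp2]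
    ring
  rw [hS, hRicSq, hScal]
  have h4 := (esymm_psum (Finset.univ : Finset (Fin n)) lam).2.2.2
  rw [← hp1, ← hp2, ← hp3, ← hp4] at h4
  linear_combination (-1/4) * h4
end

section
/- For a hypersurface curvature tensor R coming from a second fundamental form B with eigenvalues λ₁,…,λₙ, the 2q-th H. Weyl curvature invariant satisfies h_{2q} = ((2q)!/2^q)·Σ_{i₁<⋯<i_{2q}} λ_{i₁}⋯λ_{i_{2q}}, i.e. h_{2q} is (2q)!/2^q times the 2q-th elementary symmetric polynomial of the eigenvalues of B. -/
open Finset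

noncomputable section

/-- Double forms on the Euclidean space `ℝⁿ`: elements of `Λᵖ(ℝⁿ)* ⊗ Λ^q(ℝⁿ)*`,
represented by their (antisymmetric) coefficient arrays in the standard
orthonormal basis. -/
abbrev DForm (n p q : ℕ) := (Fin p → Fin n) → (Fin q → Fin n) → ℝ

/-- Transport of a double form along equalities of the bidegree. -/
def castD {n p q p' q' : ℕ} (hp : p = p') (hq : q = q') (ω : DForm n p q) :
    DForm n p' q' :=
  fun x y => ω (x ∘ Fin.cast hp) (y ∘ Fin.cast hq)

/-- The product in the ring of double forms: the exterior product taken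
simultaneously on both factors. -/
def dmul {n p q r s : ℕ} (ω : DForm n p q) (η : DForm n r s) :
    DForm n (p + r) (q + s) :=
  fun x y =>
    (1 / ((p.factorial * r.factorial * q.factorial * s.factorial : ℕ) : ℝ)) *
      ∑ σ : Equiv.Perm (Fin (p + r)), ∑ τ : Equiv.Perm (Fin (q + s)),
        ((Equiv.Perm.sign σ : ℤ) : ℝ) * ((Equiv.Perm.sign τ : ℤ) : ℝ) *
          (ω (fun i => x (σ (Fin.castAdd r i))) (fun j => y (τ (Fin.castAdd s j))) *
           η (fun i => x (σ (Fin.natAdd p i))) (fun j => y (τ (Fin.natAdd q j))))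

/-- The metric `g` of `ℝⁿ` as a double form of bidegree `(1,1)` (the identity
element of the contraction: the Kronecker delta). -/
def gform (n : ℕ) : DForm n 1 1 := fun x y => if x 0 = y 0 then 1 else 0

/-- Powers `g^k` of the metric in the ring of double forms. -/
def gpow (n : ℕ) : (k : ℕ) → DForm n k k
  | 0 => fun _ _ => 1
  | k + 1 => castD (Nat.add_comm 1 k) (Nat.add_comm 1 k) (dmul (gform n) (gpow n k))

/-- The contraction map `c : D^{p+1,q+1} → D^{p,q}`. -/
def contr {n p q : ℕ} (ω : DForm n (p + 1) (q + 1)) : DForm n p q :=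
  fun x y => ∑ j : Fin n, ω (Fin.cons j x) (Fin.cons j y)

/-- The natural inner product on `D^{p,q}` (for which the increasing basis
monomials are orthonormal). -/
def dinner {n p q : ℕ} (ω₁ ω₂ : DForm n p q) : ℝ :=
  (1 / ((p.factorial * q.factorial : ℕ) : ℝ)) *
    ∑ x : Fin p → Fin n, ∑ y : Fin q → Fin n, ω₁ x y * ω₂ x y

/-- A coefficient array represents a double form iff it is antisymmetric in each
group of arguments. -/
def IsAlt {n p q : ℕ} (ω : DForm n p q) : Prop :=
  (∀ (σ : Equiv.Perm (Fin p)) (x : Fin p → Fin n) (y : Fin q → Fin n),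
      ω (x ∘ σ) y = ((Equiv.Perm.sign σ : ℤ) : ℝ) * ω x y) ∧
  (∀ (τ : Equiv.Perm (Fin q)) (x : Fin p → Fin n) (y : Fin q → Fin n),
      ω x (y ∘ τ) = ((Equiv.Perm.sign τ : ℤ) : ℝ) * ω x y)

/-- A double form in `D^{p,p}` is symmetric if it is invariant under exchanging
the two factors. -/
def IsSym {n p : ℕ} (ω : DForm n p p) : Prop := ∀ x y, ω x y = ω y x

/-- The first Bianchi map sends `D^{p,q+1}` to `D^{p+1,q}`; a double form satisfies
the first Bianchi identity when it lies in its kernel. -/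
def FirstBianchi {n p q : ℕ} (ω : DForm n p (q + 1)) : Prop :=
  ∀ (x : Fin (p + 1) → Fin n) (y : Fin q → Fin n),
    ∑ k : Fin (p + 1),
      (-1 : ℝ) ^ (k : ℕ) * ω (x ∘ Fin.succAbove k) (Fin.cons (x k) y) = 0

/-- The sign of a family `(f i)` of indices: the signature of `f` viewed as a
permutation if it is bijective, and `0` otherwise (Levi-Civita symbol). -/
def eps {n : ℕ} (f : Fin n → Fin n) : ℝ :=
  if h : Function.Bijective f then
    ((Equiv.Perm.sign (Equiv.ofBijective f h) : ℤ) : ℝ)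
  else 0

/-- The Hodge star operator on double forms, acting as the usual Hodge star
simultaneously on both factors. -/
def dstar {n p q : ℕ} (hp : p ≤ n) (hq : q ≤ n) (ω : DForm n p q) :
    DForm n (n - p) (n - q) :=
  fun x y =>
    (1 / ((p.factorial * q.factorial : ℕ) : ℝ)) *
      ∑ u : Fin p → Fin n, ∑ v : Fin q → Fin n,
        eps (fun i => Fin.append u x (Fin.cast (by omega) i)) *
        eps (fun i => Fin.append v y (Fin.cast (by omega) i)) * ω u v

/-- The `q`-th power of a curvature double form `R ∈ D^{2,2}` in the ring of
double forms. -/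
def dpow {n : ℕ} (R : DForm n 2 2) : (q : ℕ) → DForm n (2 * q) (2 * q)
  | 0 => castD (by omega) (by omega) (fun (_ : Fin 0 → Fin n) (_ : Fin 0 → Fin n) => (1 : ℝ))
  | q + 1 => castD (by omega) (by omega) (dmul R (dpow R q))

def detB {n : ℕ} (B : Fin n → Fin n → ℝ) (k : ℕ) : DForm n k k :=
  fun x y => ∑ ρ : Equiv.Perm (Fin k),
    ((Equiv.Perm.sign ρ : ℤ) : ℝ) * ∏ i, B (x i) (y (ρ i))
lemma detB_eq_det {n k : ℕ} (B : Fin n → Fin n → ℝ) (x y : Fin k → Fin n) :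
    detB B k x y = Matrix.det (Matrix.of fun i j => B (x j) (y i)) := by
  rw [Matrix.det_apply']
  rfl

lemma detB_cast {n a b : ℕ} (B : Fin n → Fin n → ℝ) (h : a = b)
    (x y : Fin b → Fin n) :
    detB B a (x ∘ Fin.cast h) (y ∘ Fin.cast h) = detB B b x y := by
  subst h; rfl

lemma sign_sq {α : Type*} [DecidableEq α] [Fintype α] (g : Equiv.Perm α) :
    (((Equiv.Perm.sign g : ℤ) : ℝ)) * ((Equiv.Perm.sign g : ℤ) : ℝ) = 1 := by
  rcases Int.units_eq_one_or (Equiv.Perm.sign g) with h | h <;> simp [h]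

lemma sum_comm3 {M : Type*} [AddCommMonoid M] {ι κ μ : Type*} [Fintype ι] [Fintype κ]
    [Fintype μ] (f : ι → κ → μ → M) :
    ∑ a : ι, ∑ b : κ, ∑ c : μ, f a b c = ∑ b : κ, ∑ c : μ, ∑ a : ι, f a b c := by
  rw [Finset.sum_comm]
  exact Finset.sum_congr rfl fun b _ => Finset.sum_comm

lemma dmul_detB {n p r : ℕ} (B : Fin n → Fin n → ℝ) (c : ℝ)
    (x y : Fin (p + r) → Fin n) :
    dmul (detB B p) (fun u v => c * detB B r u v) x y
      = c * (((p + r).factorial : ℝ) / ((p.factorial : ℝ) * (r.factorial : ℝ)))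
          * detB B (p + r) x y := by
  classical
  have key : ∀ σ τ : Equiv.Perm (Fin (p + r)),
      ((Equiv.Perm.sign σ : ℤ) : ℝ) * ((Equiv.Perm.sign τ : ℤ) : ℝ) *
        (detB B p (fun i => x (σ (Fin.castAdd r i))) (fun j => y (τ (Fin.castAdd r j))) *
          (c * detB B r (fun i => x (σ (Fin.natAdd p i))) (fun j => y (τ (Fin.natAdd p j)))))
      = ∑ α : Equiv.Perm (Fin p), ∑ β : Equiv.Perm (Fin r),
          ((Equiv.Perm.sign σ : ℤ) : ℝ) * ((Equiv.Perm.sign τ : ℤ) : ℝ) *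
            ((Equiv.Perm.sign α : ℤ) : ℝ) * ((Equiv.Perm.sign β : ℤ) : ℝ) *
            (c * ∏ k : Fin (p + r),
              B (x (σ k))
                (y (τ (finSumFinEquiv.permCongr (Equiv.Perm.sumCongr α β) k)))) := by
    intro σ τ
    unfold detB
    beta_reduce
    rw [show ((Equiv.Perm.sign σ : ℤ) : ℝ) * ((Equiv.Perm.sign τ : ℤ) : ℝ) *
        ((∑ α : Equiv.Perm (Fin p), ((Equiv.Perm.sign α : ℤ) : ℝ) *
            ∏ i : Fin p, B (x (σ (Fin.castAdd r i))) (y (τ (Fin.castAdd r (α i))))) *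
          (c * ∑ β : Equiv.Perm (Fin r), ((Equiv.Perm.sign β : ℤ) : ℝ) *
            ∏ j : Fin r, B (x (σ (Fin.natAdd p j))) (y (τ (Fin.natAdd p (β j)))))) =
        (((Equiv.Perm.sign σ : ℤ) : ℝ) * ((Equiv.Perm.sign τ : ℤ) : ℝ) * c) *
        ((∑ α : Equiv.Perm (Fin p), ((Equiv.Perm.sign α : ℤ) : ℝ) *
            ∏ i : Fin p, B (x (σ (Fin.castAdd r i))) (y (τ (Fin.castAdd r (α i))))) *
          (∑ β : Equiv.Perm (Fin r), ((Equiv.Perm.sign β : ℤ) : ℝ) *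
            ∏ j : Fin r, B (x (σ (Fin.natAdd p j))) (y (τ (Fin.natAdd p (β j)))))) from by ring]
    rw [Finset.sum_mul_sum, Finset.mul_sum]
    refine Finset.sum_congr rfl fun α _ => ?_
    rw [Finset.mul_sum]
    refine Finset.sum_congr rfl fun β _ => ?_
    have hprod :
        (∏ i : Fin p, B (x (σ (Fin.castAdd r i))) (y (τ (Fin.castAdd r (α i))))) *
        ∏ j : Fin r, B (x (σ (Fin.natAdd p j))) (y (τ (Fin.natAdd p (β j)))) =
        ∏ k : Fin (p + r),
          B (x (σ k)) (y (τ (finSumFinEquiv.permCongr (Equiv.Perm.sumCongr α β) k))) := by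
      have h1 :
          (∏ i : Fin p, B (x (σ (Fin.castAdd r i))) (y (τ (Fin.castAdd r (α i))))) *
          ∏ j : Fin r, B (x (σ (Fin.natAdd p j))) (y (τ (Fin.natAdd p (β j)))) =
          ∏ u : Fin p ⊕ Fin r,
            B (x (σ (finSumFinEquiv u)))
              (y (τ (finSumFinEquiv ((Equiv.Perm.sumCongr α β) u)))) := by
        rw [Fintype.prod_sum_type]
        simp
      rw [h1,
        ← Equiv.prod_comp finSumFinEquiv
          (fun k => B (x (σ k)) (y (τ (finSumFinEquiv.permCongr (Equiv.Perm.sumCongr α β) k))))]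
      exact Fintype.prod_congr _ _ fun u => by simp [Equiv.permCongr_apply]
    rw [← hprod]
    ring
  have key2 : ∀ σ : Equiv.Perm (Fin (p + r)),
      (∑ τ : Equiv.Perm (Fin (p + r)),
        ((Equiv.Perm.sign σ : ℤ) : ℝ) * ((Equiv.Perm.sign τ : ℤ) : ℝ) *
          (detB B p (fun i => x (σ (Fin.castAdd r i))) (fun j => y (τ (Fin.castAdd r j))) *
            (c * detB B r (fun i => x (σ (Fin.natAdd p i))) (fun j => y (τ (Fin.natAdd p j))))))
      = ((p.factorial * r.factorial : ℕ) : ℝ) *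
          ∑ ρ : Equiv.Perm (Fin (p + r)),
            c * (((Equiv.Perm.sign ρ : ℤ) : ℝ) * ∏ m, B (x m) (y (ρ m))) := by
    intro σ
    rw [Finset.sum_congr rfl fun τ _ => key σ τ]
    rw [sum_comm3]
    have hτ : ∀ (α : Equiv.Perm (Fin p)) (β : Equiv.Perm (Fin r)),
        (∑ τ : Equiv.Perm (Fin (p + r)),
          ((Equiv.Perm.sign σ : ℤ) : ℝ) * ((Equiv.Perm.sign τ : ℤ) : ℝ) *
            ((Equiv.Perm.sign α : ℤ) : ℝ) * ((Equiv.Perm.sign β : ℤ) : ℝ) *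
            (c * ∏ k : Fin (p + r),
              B (x (σ k))
                (y (τ (finSumFinEquiv.permCongr (Equiv.Perm.sumCongr α β) k)))))
        = ∑ ρ : Equiv.Perm (Fin (p + r)),
            c * (((Equiv.Perm.sign ρ : ℤ) : ℝ) * ∏ m, B (x m) (y (ρ m))) := by
      intro α β
      set π := finSumFinEquiv.permCongr (Equiv.Perm.sumCongr α β) with hπ
      have hsπ : Equiv.Perm.sign π = Equiv.Perm.sign α * Equiv.Perm.sign β := by
        rw [hπ, Equiv.Perm.sign_permCongr, Equiv.Perm.sign_sumCongr]
      rw [← Equiv.sum_comp (Equiv.mulRight (σ * π⁻¹))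
        (fun τ => ((Equiv.Perm.sign σ : ℤ) : ℝ) * ((Equiv.Perm.sign τ : ℤ) : ℝ) *
            ((Equiv.Perm.sign α : ℤ) : ℝ) * ((Equiv.Perm.sign β : ℤ) : ℝ) *
            (c * ∏ k : Fin (p + r), B (x (σ k)) (y (τ (π k)))))]
      refine Finset.sum_congr rfl fun ρ _ => ?_
      have h1 : ((Equiv.Perm.sign (Equiv.mulRight (σ * π⁻¹) ρ) : ℤ) : ℝ)
          = ((Equiv.Perm.sign ρ : ℤ) : ℝ) * ((Equiv.Perm.sign σ : ℤ) : ℝ) *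
            (((Equiv.Perm.sign α : ℤ) : ℝ) * ((Equiv.Perm.sign β : ℤ) : ℝ)) := by
        simp only [Equiv.coe_mulRight, Equiv.Perm.sign_mul, Equiv.Perm.sign_inv, hsπ,
          Units.val_mul, Int.cast_mul]
        ring
      have h2 : (∏ k : Fin (p + r), B (x (σ k)) (y ((Equiv.mulRight (σ * π⁻¹) ρ) (π k))))
          = ∏ m, B (x m) (y (ρ m)) := by
        have : ∀ k, (Equiv.mulRight (σ * π⁻¹) ρ) (π k) = ρ (σ k) := by
          intro k
          simp [Equiv.Perm.mul_apply]
        rw [Finset.prod_congr rfl fun k _ => by rw [this k]]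
        exact Equiv.prod_comp σ (fun m => B (x m) (y (ρ m)))
      rw [h1, h2]
      calc ((Equiv.Perm.sign σ : ℤ) : ℝ) *
            (((Equiv.Perm.sign ρ : ℤ) : ℝ) * ((Equiv.Perm.sign σ : ℤ) : ℝ) *
              (((Equiv.Perm.sign α : ℤ) : ℝ) * ((Equiv.Perm.sign β : ℤ) : ℝ))) *
            ((Equiv.Perm.sign α : ℤ) : ℝ) * ((Equiv.Perm.sign β : ℤ) : ℝ) *
            (c * ∏ m, B (x m) (y (ρ m)))
          = (c * (((Equiv.Perm.sign ρ : ℤ) : ℝ) * ∏ m, B (x m) (y (ρ m)))) *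
              ((((Equiv.Perm.sign σ : ℤ) : ℝ) * ((Equiv.Perm.sign σ : ℤ) : ℝ)) *
               ((((Equiv.Perm.sign α : ℤ) : ℝ) * ((Equiv.Perm.sign α : ℤ) : ℝ)) *
                (((Equiv.Perm.sign β : ℤ) : ℝ) * ((Equiv.Perm.sign β : ℤ) : ℝ)))) := by
            ring
        _ = c * (((Equiv.Perm.sign ρ : ℤ) : ℝ) * ∏ m, B (x m) (y (ρ m))) := by
            rw [sign_sq, sign_sq, sign_sq]; ring
    rw [Finset.sum_congr rfl fun α _ => Finset.sum_congr rfl fun β _ => hτ α β]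
    simp only [Finset.sum_const, smul_smul, Finset.card_univ, Fintype.card_perm,
      Fintype.card_fin, nsmul_eq_mul]
    push_cast
    ring
  show (1 / ((p.factorial * r.factorial * p.factorial * r.factorial : ℕ) : ℝ)) *
      ∑ σ : Equiv.Perm (Fin (p + r)), ∑ τ : Equiv.Perm (Fin (p + r)),
        ((Equiv.Perm.sign σ : ℤ) : ℝ) * ((Equiv.Perm.sign τ : ℤ) : ℝ) *
          (detB B p (fun i => x (σ (Fin.castAdd r i))) (fun j => y (τ (Fin.castAdd r j))) *
            (c * detB B r (fun i => x (σ (Fin.natAdd p i))) (fun j => y (τ (Fin.natAdd p j)))))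
      = _
  rw [Finset.sum_congr rfl fun σ (_ : σ ∈ Finset.univ) => key2 σ]
  simp only [Finset.sum_const, Finset.card_univ, Fintype.card_perm, Fintype.card_fin,
    nsmul_eq_mul]
  rw [← Finset.mul_sum]
  unfold detB
  have hp0 : ((p.factorial : ℕ) : ℝ) ≠ 0 := Nat.cast_ne_zero.mpr (Nat.factorial_ne_zero p)
  have hr0 : ((r.factorial : ℕ) : ℝ) ≠ 0 := Nat.cast_ne_zero.mpr (Nat.factorial_ne_zero r)
  push_cast
  field_simp

lemma dpow_detB {n : ℕ} (B : Fin n → Fin n → ℝ) (R : DForm n 2 2)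
    (hR : R = detB B 2) (q : ℕ) :
    dpow R q = fun x y =>
      (((2 * q).factorial : ℝ) / 2 ^ q) * detB B (2 * q) x y := by
  induction q with
  | zero =>
    funext x y
    show (1 : ℝ) = _
    simp [detB]
  | succ q ih =>
    funext x y
    show castD (by omega) (by omega) (dmul R (dpow R q)) x y = _
    rw [ih, hR]
    simp only [castD]
    rw [dmul_detB]
    rw [detB_cast B (by omega : 2 + 2 * q = 2 * (q + 1))]
    have h22 : 2 + 2 * q = 2 * (q + 1) := by omega
    rw [h22]
    have h0 : (((2 * q).factorial : ℕ) : ℝ) ≠ 0 :=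
      Nat.cast_ne_zero.mpr (Nat.factorial_ne_zero _)
    have h2 : ((2 : ℕ).factorial : ℝ) = 2 := by norm_num [Nat.factorial]
    rw [h2]
    have hpow : (2 : ℝ) ^ q ≠ 0 := by positivity
    field_simp
    ring

lemma card_fiber {k n : ℕ} (s : Finset (Fin n)) (hcard : s.card = k) :
    Fintype.card {x : Fin k → Fin n //
      Function.Injective x ∧ Finset.image x Finset.univ = s} = k.factorial := by
  classical
  have hsc : Fintype.card {i // i ∈ s} = k := by rw [Fintype.card_coe, hcard]
  have heq : Fintype.card (Fin k ≃ {i // i ∈ s}) = k.factorial := by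
    rw [Fintype.card_equiv (Fintype.equivFinOfCardEq hsc).symm, Fintype.card_fin]
  rw [← heq]
  apply Fintype.card_congr
  refine
    { toFun := fun x =>
        Equiv.ofBijective
          (fun m => (⟨x.1 m, by
            have := Finset.mem_image_of_mem x.1 (Finset.mem_univ m)
            rwa [x.2.2] at this⟩ : {i // i ∈ s}))
          ?_
      invFun := fun e => ⟨fun m => (e m : Fin n), ?_, ?_⟩
      left_inv := ?_
      right_inv := ?_ }
  · constructor
    · intro a b h
      exact x.2.1 (congrArg Subtype.val h)
    · rw [← Finite.injective_iff_surjective_of_equiv]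
      · intro a b h
        exact x.2.1 (congrArg Subtype.val h)
      · exact Fintype.equivOfCardEq (by rw [Fintype.card_fin, hsc])
  · intro a b h
    exact e.injective (Subtype.ext h)
  · ext j
    simp only [Finset.mem_image, Finset.mem_univ, true_and]
    constructor
    · rintro ⟨m, rfl⟩
      exact (e m).2
    · intro hj
      exact ⟨e.symm ⟨j, hj⟩, by simp⟩
  · intro x
    exact Subtype.ext (funext fun m => rfl)
  · intro e
    exact Equiv.ext fun m => Subtype.ext rfl

lemma trace_detB {n k : ℕ} (lam : Fin n → ℝ) (B : Fin n → Fin n → ℝ)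
    (hB : ∀ i j, B i j = if i = j then lam i else 0) :
    ∑ x : Fin k → Fin n, detB B k x x
      = (k.factorial : ℝ) * ∑ s ∈ Finset.univ.powersetCard k, ∏ i ∈ s, lam i := by
  classical
  have hdet : ∀ x : Fin k → Fin n, detB B k x x =
      if Function.Injective x then ∏ i, lam (x i) else 0 := by
    intro x
    rw [detB_eq_det]
    by_cases hx : Function.Injective x
    · rw [if_pos hx]
      have hM : (Matrix.of fun i j => B (x j) (x i))
          = Matrix.diagonal (fun i => lam (x i)) := by
        ext i j
        simp only [Matrix.of_apply, Matrix.diagonal_apply, hB]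
        by_cases hij : i = j
        · subst hij; simp
        · rw [if_neg (fun h : x j = x i => hij ((hx h).symm)), if_neg hij]
      rw [hM, Matrix.det_diagonal]
    · rw [if_neg hx]
      obtain ⟨i, j, hxij, hij⟩ := Function.not_injective_iff.mp hx
      refine Matrix.det_zero_of_row_eq hij ?_
      funext t
      show B (x t) (x i) = B (x t) (x j)
      rw [hxij]
  simp_rw [hdet]
  rw [← Finset.sum_filter]
  rw [← Finset.sum_fiberwise_of_maps_to
    (g := fun x : Fin k → Fin n => Finset.image x Finset.univ)
    (t := Finset.univ.powersetCard k)
    (fun x hx => by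
      rw [Finset.mem_powersetCard]
      refine ⟨Finset.subset_univ _, ?_⟩
      rw [Finset.card_image_of_injective _ (Finset.mem_filter.mp hx).2,
        Finset.card_univ, Fintype.card_fin])]
  rw [Finset.mul_sum]
  refine Finset.sum_congr rfl fun s hs => ?_
  obtain ⟨-, hcard⟩ := Finset.mem_powersetCard.mp hs
  have hterm : ∀ x ∈ (Finset.univ.filter
      (fun x : Fin k → Fin n => Function.Injective x)).filter
      (fun x => Finset.image x Finset.univ = s),
      (∏ i, lam (x i)) = ∏ i ∈ s, lam i := by
    intro x hx
    obtain ⟨hx1, himg⟩ := Finset.mem_filter.mp hx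
    have hinj := (Finset.mem_filter.mp hx1).2
    rw [← himg, Finset.prod_image (fun a _ b _ h => hinj h)]
  rw [Finset.sum_congr rfl hterm, Finset.sum_const, nsmul_eq_mul]
  congr 1
  rw [Finset.filter_filter]
  have : (Finset.univ.filter fun x : Fin k → Fin n =>
      Function.Injective x ∧ Finset.image x Finset.univ = s).card
      = Fintype.card {x : Fin k → Fin n //
          Function.Injective x ∧ Finset.image x Finset.univ = s} :=
    (Fintype.card_subtype _).symm
  rw [this, card_fiber s hcard]

/-- For a hypersurface curvature tensor coming via the Gauss equation
`R_{ijkl} = B_{ik}B_{jl} - B_{il}B_{jk}` from a second fundamental form `B` with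
eigenvalues `λ₁, …, λₙ`, the `2q`-th H. Weyl curvature invariant
`h_{2q} = (1/(2q)!)·c^{2q}(R^q)` equals `((2q)!/2^q)` times the `2q`-th elementary
symmetric polynomial of the eigenvalues of `B`. -/
theorem hypersurface_h2q (n q : ℕ) (hq : 2 * q ≤ n) (lam : Fin n → ℝ)
    (B : Fin n → Fin n → ℝ) (hB : ∀ i j, B i j = if i = j then lam i else 0)
    (R : DForm n 2 2)
    (hR : ∀ x y, R x y = B (x 0) (y 0) * B (x 1) (y 1) - B (x 0) (y 1) * B (x 1) (y 0)) :
    (1 / (((2 * q).factorial : ℕ) : ℝ)) * (∑ x : Fin (2 * q) → Fin n, dpow R q x x)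
      = (((2 * q).factorial : ℝ) / 2 ^ q) *
          ∑ s ∈ Finset.univ.powersetCard (2 * q), ∏ i ∈ s, lam i := by
  classical
  have hR' : R = detB B 2 := by
    funext u v
    rw [hR u v, detB_eq_det, Matrix.det_fin_two]
    simp only [Matrix.of_apply]
    ring
  rw [dpow_detB B R hR' q]
  simp only []
  rw [← Finset.mul_sum, trace_detB lam B hB]
  have h0 : (((2 * q).factorial : ℕ) : ℝ) ≠ 0 :=
    Nat.cast_ne_zero.mpr (Nat.factorial_ne_zero _)
  have hpow : (2 : ℝ) ^ q ≠ 0 := by positivity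
  field_simp

end
end

section
/- Multiplication by the metric g and contraction c are adjoint on double forms: ⟨gω₁, ω₂⟩ = ⟨ω₁, cω₂⟩ for all double forms ω₁ ∈ D^{p,q}, ω₂ ∈ D^{p+1,q+1}. -/
open Finset

noncomputable section

private lemma sum_comp_perm {m n : ℕ} (σ : Equiv.Perm (Fin m)) (f : (Fin m → Fin n) → ℝ) :
    ∑ x : Fin m → Fin n, f (x ∘ σ) = ∑ x : Fin m → Fin n, f x :=
  Fintype.sum_bijective (fun x : Fin m → Fin n => x ∘ σ)
    (Function.bijective_iff_has_inverse.mpr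
      ⟨fun x => x ∘ σ.symm, fun x => by ext i; simp, fun x => by ext i; simp⟩)
    _ _ (fun x => rfl)

private lemma sign_sq_s12 {m : ℕ} (σ : Equiv.Perm (Fin m)) :
    ((Equiv.Perm.sign σ : ℤ) : ℝ) * ((Equiv.Perm.sign σ : ℤ) : ℝ) = 1 := by
  rcases Int.units_eq_one_or (Equiv.Perm.sign σ) with h | h <;> simp [h]

private lemma swap4 {α β γ δ : Type*} [Fintype α] [Fintype β] [Fintype γ] [Fintype δ]
    (f : α → β → γ → δ → ℝ) :
    ∑ a, ∑ b, ∑ c, ∑ d, f a b c d = ∑ c, ∑ d, ∑ a, ∑ b, f a b c d :=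
  calc ∑ a, ∑ b, ∑ c, ∑ d, f a b c d
      = ∑ a, ∑ c, ∑ b, ∑ d, f a b c d :=
        Finset.sum_congr rfl fun _ _ => Finset.sum_comm
    _ = ∑ c, ∑ a, ∑ b, ∑ d, f a b c d := Finset.sum_comm
    _ = ∑ c, ∑ a, ∑ d, ∑ b, f a b c d :=
        Finset.sum_congr rfl fun _ _ => Finset.sum_congr rfl fun _ _ => Finset.sum_comm
    _ = ∑ c, ∑ d, ∑ a, ∑ b, f a b c d :=
        Finset.sum_congr rfl fun _ _ => Finset.sum_comm

private lemma swap3 {α β γ : Type*} [Fintype α] [Fintype β] [Fintype γ]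
    (f : α → β → γ → ℝ) :
    ∑ a, ∑ b, ∑ c, f a b c = ∑ c, ∑ a, ∑ b, f a b c :=
  calc ∑ a, ∑ b, ∑ c, f a b c
      = ∑ a, ∑ c, ∑ b, f a b c := Finset.sum_congr rfl fun _ _ => Finset.sum_comm
    _ = ∑ c, ∑ a, ∑ b, f a b c := Finset.sum_comm

/-- Multiplication by the metric `g` and the contraction `c` are adjoint to each
other on double forms: `⟨g·ω₁, ω₂⟩ = ⟨ω₁, c·ω₂⟩` for all `ω₁ ∈ D^{p,q}`,
`ω₂ ∈ D^{p+1,q+1}`. -/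
theorem gmul_contr_adjoint (n p q : ℕ)
    (ω₁ : DForm n p q) (ω₂ : DForm n (p + 1) (q + 1))
    (h₁ : IsAlt ω₁) (h₂ : IsAlt ω₂) :
    dinner (castD (Nat.add_comm 1 p) (Nat.add_comm 1 q) (dmul (gform n) ω₁)) ω₂
      = dinner ω₁ (contr ω₂) := by
  classical
  obtain ⟨h₂x, h₂y⟩ := h₂
  set H : (Fin (p+1) → Fin n) → (Fin (q+1) → Fin n) → ℝ :=
    fun x y => (if x 0 = y 0 then (1:ℝ) else 0) * ω₁ (Fin.tail x) (Fin.tail y) with hH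
  set S : ℝ := ∑ x : Fin (p+1) → Fin n, ∑ y : Fin (q+1) → Fin n, H x y * ω₂ x y with hS
  -- Step 1: the inner double sum is independent of the permutations
  have key : ∀ (σ' : Equiv.Perm (Fin (p+1))) (τ' : Equiv.Perm (Fin (q+1))),
      (∑ x : Fin (p+1) → Fin n, ∑ y : Fin (q+1) → Fin n,
        ((Equiv.Perm.sign σ' : ℤ) : ℝ) * ((Equiv.Perm.sign τ' : ℤ) : ℝ) *
          (H (x ∘ ⇑σ') (y ∘ ⇑τ') * ω₂ x y)) = S := by
    intro σ' τ'
    have e1 : ∀ x : Fin (p+1) → Fin n, (x ∘ ⇑σ'⁻¹) ∘ ⇑σ' = x := by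
      intro x; funext i; simp
    have e2 : ∀ y : Fin (q+1) → Fin n, (y ∘ ⇑τ'⁻¹) ∘ ⇑τ' = y := by
      intro y; funext j; simp
    calc (∑ x : Fin (p+1) → Fin n, ∑ y : Fin (q+1) → Fin n,
            ((Equiv.Perm.sign σ' : ℤ) : ℝ) * ((Equiv.Perm.sign τ' : ℤ) : ℝ) *
              (H (x ∘ ⇑σ') (y ∘ ⇑τ') * ω₂ x y))
        = ∑ x : Fin (p+1) → Fin n, ∑ y : Fin (q+1) → Fin n,
            ((Equiv.Perm.sign σ' : ℤ) : ℝ) * ((Equiv.Perm.sign τ' : ℤ) : ℝ) *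
              (H ((x ∘ ⇑σ'⁻¹) ∘ ⇑σ') (y ∘ ⇑τ') * ω₂ (x ∘ ⇑σ'⁻¹) y) :=
          (sum_comp_perm σ'⁻¹ (fun x => ∑ y : Fin (q+1) → Fin n,
            ((Equiv.Perm.sign σ' : ℤ) : ℝ) * ((Equiv.Perm.sign τ' : ℤ) : ℝ) *
              (H (x ∘ ⇑σ') (y ∘ ⇑τ') * ω₂ x y))).symm
      _ = ∑ x : Fin (p+1) → Fin n, ∑ y : Fin (q+1) → Fin n,
            ((Equiv.Perm.sign σ' : ℤ) : ℝ) * ((Equiv.Perm.sign τ' : ℤ) : ℝ) *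
              (H ((x ∘ ⇑σ'⁻¹) ∘ ⇑σ') ((y ∘ ⇑τ'⁻¹) ∘ ⇑τ') * ω₂ (x ∘ ⇑σ'⁻¹) (y ∘ ⇑τ'⁻¹)) :=
          Finset.sum_congr rfl fun x _ =>
            (sum_comp_perm τ'⁻¹ (fun y =>
              ((Equiv.Perm.sign σ' : ℤ) : ℝ) * ((Equiv.Perm.sign τ' : ℤ) : ℝ) *
                (H ((x ∘ ⇑σ'⁻¹) ∘ ⇑σ') (y ∘ ⇑τ') * ω₂ (x ∘ ⇑σ'⁻¹) y))).symm
      _ = S := by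
          rw [hS]
          refine Finset.sum_congr rfl fun x _ => Finset.sum_congr rfl fun y _ => ?_
          rw [e1, e2, h₂x, h₂y, Equiv.Perm.sign_inv, Equiv.Perm.sign_inv]
          calc ((Equiv.Perm.sign σ' : ℤ) : ℝ) * ((Equiv.Perm.sign τ' : ℤ) : ℝ) *
                (H x y * (((Equiv.Perm.sign σ' : ℤ) : ℝ) *
                  (((Equiv.Perm.sign τ' : ℤ) : ℝ) * ω₂ x y)))
              = (((Equiv.Perm.sign σ' : ℤ) : ℝ) * ((Equiv.Perm.sign σ' : ℤ) : ℝ)) *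
                ((((Equiv.Perm.sign τ' : ℤ) : ℝ) * ((Equiv.Perm.sign τ' : ℤ) : ℝ)) *
                  (H x y * ω₂ x y)) := by ring
            _ = H x y * ω₂ x y := by rw [sign_sq_s12, sign_sq_s12]; ring
  have key2 : ∀ (σ : Equiv.Perm (Fin (1+p))) (τ : Equiv.Perm (Fin (1+q))),
      (∑ x : Fin (p+1) → Fin n, ∑ y : Fin (q+1) → Fin n,
        ((Equiv.Perm.sign σ : ℤ) : ℝ) * ((Equiv.Perm.sign τ : ℤ) : ℝ) *
          (H (x ∘ ⇑((finCongr (Nat.add_comm 1 p)).permCongr σ))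
             (y ∘ ⇑((finCongr (Nat.add_comm 1 q)).permCongr τ)) * ω₂ x y)) = S := by
    intro σ τ
    have h := key ((finCongr (Nat.add_comm 1 p)).permCongr σ)
      ((finCongr (Nat.add_comm 1 q)).permCongr τ)
    rwa [Equiv.Perm.sign_permCongr, Equiv.Perm.sign_permCongr] at h
  -- Step 2: pointwise identification of the product with `H`
  have point : ∀ (σ : Equiv.Perm (Fin (1+p))) (τ : Equiv.Perm (Fin (1+q)))
      (x : Fin (p+1) → Fin n) (y : Fin (q+1) → Fin n),
      ((if x (Fin.cast (Nat.add_comm 1 p) (σ (Fin.castAdd p 0)))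
            = y (Fin.cast (Nat.add_comm 1 q) (τ (Fin.castAdd q 0))) then (1:ℝ) else 0) *
        ω₁ (fun i => x (Fin.cast (Nat.add_comm 1 p) (σ (Fin.natAdd 1 i))))
           (fun j => y (Fin.cast (Nat.add_comm 1 q) (τ (Fin.natAdd 1 j)))))
      = H (x ∘ ⇑((finCongr (Nat.add_comm 1 p)).permCongr σ))
          (y ∘ ⇑((finCongr (Nat.add_comm 1 q)).permCongr τ)) := by
    intro σ τ x y
    have hx0 : (x ∘ ⇑((finCongr (Nat.add_comm 1 p)).permCongr σ)) 0
        = x (Fin.cast (Nat.add_comm 1 p) (σ (Fin.castAdd p 0))) := by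
      have h0 : Fin.castAdd p (0 : Fin 1) = Fin.cast (Nat.add_comm 1 p).symm (0 : Fin (p+1)) := by
        apply Fin.ext; simp
      simp [Equiv.permCongr_apply, h0]
    have hy0 : (y ∘ ⇑((finCongr (Nat.add_comm 1 q)).permCongr τ)) 0
        = y (Fin.cast (Nat.add_comm 1 q) (τ (Fin.castAdd q 0))) := by
      have h0 : Fin.castAdd q (0 : Fin 1) = Fin.cast (Nat.add_comm 1 q).symm (0 : Fin (q+1)) := by
        apply Fin.ext; simp
      simp [Equiv.permCongr_apply, h0]
    have hxt : Fin.tail (x ∘ ⇑((finCongr (Nat.add_comm 1 p)).permCongr σ))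
        = fun i => x (Fin.cast (Nat.add_comm 1 p) (σ (Fin.natAdd 1 i))) := by
      funext i
      have h0 : Fin.natAdd 1 i = Fin.cast (Nat.add_comm 1 p).symm i.succ := by
        apply Fin.ext; simp [Nat.add_comm]
      simp [Fin.tail, Equiv.permCongr_apply, h0]
    have hyt : Fin.tail (y ∘ ⇑((finCongr (Nat.add_comm 1 q)).permCongr τ))
        = fun j => y (Fin.cast (Nat.add_comm 1 q) (τ (Fin.natAdd 1 j))) := by
      funext j
      have h0 : Fin.natAdd 1 j = Fin.cast (Nat.add_comm 1 q).symm j.succ := by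
        apply Fin.ext; simp [Nat.add_comm]
      simp [Fin.tail, Equiv.permCongr_apply, h0]
    rw [hH]
    simp only [hx0, hy0, hxt, hyt]
  -- Step 3: compute the left-hand side
  have L : dinner (castD (Nat.add_comm 1 p) (Nat.add_comm 1 q) (dmul (gform n) ω₁)) ω₂
      = (1 / (((p+1).factorial * (q+1).factorial : ℕ) : ℝ)) *
        ((1 / ((Nat.factorial 1 * p.factorial * Nat.factorial 1 * q.factorial : ℕ) : ℝ)) *
          ∑ σ : Equiv.Perm (Fin (1+p)), ∑ τ : Equiv.Perm (Fin (1+q)),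
            ∑ x : Fin (p+1) → Fin n, ∑ y : Fin (q+1) → Fin n,
              ((Equiv.Perm.sign σ : ℤ) : ℝ) * ((Equiv.Perm.sign τ : ℤ) : ℝ) *
                (H (x ∘ ⇑((finCongr (Nat.add_comm 1 p)).permCongr σ))
                   (y ∘ ⇑((finCongr (Nat.add_comm 1 q)).permCongr τ)) * ω₂ x y)) := by
    simp only [dinner, castD, dmul, gform, Function.comp_apply]
    congr 1
    rw [← swap4 (fun x y σ τ => ((Equiv.Perm.sign σ : ℤ) : ℝ) * ((Equiv.Perm.sign τ : ℤ) : ℝ) *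
          (H (x ∘ ⇑((finCongr (Nat.add_comm 1 p)).permCongr σ))
             (y ∘ ⇑((finCongr (Nat.add_comm 1 q)).permCongr τ)) * ω₂ x y)), Finset.mul_sum]
    refine Finset.sum_congr rfl fun x _ => ?_
    rw [Finset.mul_sum]
    refine Finset.sum_congr rfl fun y _ => ?_
    rw [mul_assoc]
    congr 1
    rw [Finset.sum_mul]
    refine Finset.sum_congr rfl fun σ _ => ?_
    rw [Finset.sum_mul]
    refine Finset.sum_congr rfl fun τ _ => ?_
    rw [mul_assoc, point σ τ x y]
  -- Step 4: evaluate the sum over the permutations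
  have L2 : dinner (castD (Nat.add_comm 1 p) (Nat.add_comm 1 q) (dmul (gform n) ω₁)) ω₂
      = (1 / ((p.factorial * q.factorial : ℕ) : ℝ)) * S := by
    rw [L]
    have : (∑ σ : Equiv.Perm (Fin (1+p)), ∑ τ : Equiv.Perm (Fin (1+q)),
        ∑ x : Fin (p+1) → Fin n, ∑ y : Fin (q+1) → Fin n,
          ((Equiv.Perm.sign σ : ℤ) : ℝ) * ((Equiv.Perm.sign τ : ℤ) : ℝ) *
            (H (x ∘ ⇑((finCongr (Nat.add_comm 1 p)).permCongr σ))
               (y ∘ ⇑((finCongr (Nat.add_comm 1 q)).permCongr τ)) * ω₂ x y))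
        = ((1+p).factorial : ℝ) * (((1+q).factorial : ℝ) * S) := by
      rw [Finset.sum_congr rfl fun σ _ => Finset.sum_congr rfl fun τ _ => key2 σ τ]
      simp [Finset.sum_const, Finset.card_univ, Fintype.card_perm, Fintype.card_fin,
        nsmul_eq_mul, mul_assoc]
    rw [this]
    have hp1 : ((p+1).factorial : ℝ) ≠ 0 := Nat.cast_ne_zero.mpr (Nat.factorial_ne_zero _)
    have hq1 : ((q+1).factorial : ℝ) ≠ 0 := Nat.cast_ne_zero.mpr (Nat.factorial_ne_zero _)
    have hp0 : (p.factorial : ℝ) ≠ 0 := Nat.cast_ne_zero.mpr (Nat.factorial_ne_zero _)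
    have hq0 : (q.factorial : ℝ) ≠ 0 := Nat.cast_ne_zero.mpr (Nat.factorial_ne_zero _)
    rw [Nat.add_comm 1 p, Nat.add_comm 1 q]
    push_cast
    rw [Nat.factorial_one]
    push_cast
    field_simp
  -- Step 5: compute `S` via the decomposition of maps on `Fin (k+1)`
  have Sval : S = ∑ x : Fin p → Fin n, ∑ y : Fin q → Fin n,
      ω₁ x y * ∑ j : Fin n, ω₂ (Fin.cons j x) (Fin.cons j y) := by
    have ex : ∀ F : (Fin (p+1) → Fin n) → ℝ,
        (∑ x : Fin (p+1) → Fin n, F x)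
          = ∑ j : Fin n, ∑ x : Fin p → Fin n, F (Fin.cons j x) := by
      intro F
      rw [← Equiv.sum_comp (Fin.consEquiv (fun _ : Fin (p+1) => Fin n)) F,
        Fintype.sum_prod_type]
      rfl
    have ey : ∀ F : (Fin (q+1) → Fin n) → ℝ,
        (∑ y : Fin (q+1) → Fin n, F y)
          = ∑ j : Fin n, ∑ y : Fin q → Fin n, F (Fin.cons j y) := by
      intro F
      rw [← Equiv.sum_comp (Fin.consEquiv (fun _ : Fin (q+1) => Fin n)) F,
        Fintype.sum_prod_type]
      rfl
    rw [hS, ex (fun x => ∑ y : Fin (q+1) → Fin n, H x y * ω₂ x y)]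
    calc ∑ j₁ : Fin n, ∑ x : Fin p → Fin n,
          ∑ y : Fin (q+1) → Fin n, H (Fin.cons j₁ x) y * ω₂ (Fin.cons j₁ x) y
        = ∑ j₁ : Fin n, ∑ x : Fin p → Fin n, ∑ j₂ : Fin n, ∑ y : Fin q → Fin n,
            H (Fin.cons j₁ x) (Fin.cons j₂ y) * ω₂ (Fin.cons j₁ x) (Fin.cons j₂ y) :=
          Finset.sum_congr rfl fun j₁ _ => Finset.sum_congr rfl fun x _ =>
            ey (fun y => H (Fin.cons j₁ x) y * ω₂ (Fin.cons j₁ x) y)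
      _ = ∑ j₁ : Fin n, ∑ x : Fin p → Fin n, ∑ y : Fin q → Fin n,
            ω₁ x y * ω₂ (Fin.cons j₁ x) (Fin.cons j₁ y) := by
          refine Finset.sum_congr rfl fun j₁ _ => Finset.sum_congr rfl fun x _ => ?_
          rw [Finset.sum_comm]
          refine Finset.sum_congr rfl fun y _ => ?_
          simp [hH, ite_mul, Fin.cons_zero, Fin.tail_cons]
      _ = ∑ x : Fin p → Fin n, ∑ y : Fin q → Fin n,
            ω₁ x y * ∑ j : Fin n, ω₂ (Fin.cons j x) (Fin.cons j y) := by
          rw [← swap3 (fun x y j => ω₁ x y * ω₂ (Fin.cons j x) (Fin.cons j y))]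
          exact Finset.sum_congr rfl fun x _ => Finset.sum_congr rfl fun y _ =>
            (Finset.mul_sum _ _ _).symm
  -- Conclusion
  rw [L2, Sval]
  simp only [dinner, contr]


end
end
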